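/- Let X be a weighted sequence of length n and let 𝐗 be its heavy string (choosing at each position a letter of maximum probability). Then the set ℰ of extensions of all solid factors of X equals the set of extensions of all right-maximal solid factors of X. -/
import Mathlib


open scoped Classical

def matchProb {A : Type*} (p : ℕ → A → ℝ) : ℕ → List A → ℝ
  | _, [] => 1
  | i, a :: t => p i a * matchProb p (i + 1) t

/-- `P` is a solid factor of the weighted sequence (of length `n`, probabilities `p`,
threshold `1/z`) starting at (1-based) position `i`. -/
def SolidAt {A : Type*} (n : ℕ) (z : ℝ) (p : ℕ → A → ℝ) (i : ℕ) (P : List A) : Prop :=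
  1 ≤ i ∧ i + P.length ≤ n + 1 ∧ 1 / z ≤ matchProb p i P

/-- `P` is a right-maximal solid factor at position `i`: it is solid and no one-letter
extension is solid (this includes the case that `P` ends at position `n`). -/
def RightMaximalAt {A : Type*} (n : ℕ) (z : ℝ) (p : ℕ → A → ℝ) (i : ℕ) (P : List A) : Prop :=
  SolidAt n z p i P ∧ ∀ s : A, ¬ SolidAt n z p i (P ++ [s])

/-- The heavy-string suffix `𝐗[j..n]`, where `h j` is a heaviest letter at position `j`. -/
def heavyExt {A : Type*} (h : ℕ → A) (j n : ℕ) : List A :=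
  (List.range (n + 1 - j)).map fun k => h (j + k)

/-- The set `ℰ` of extensions `F · 𝐗[j+1..n]` of all solid factors `F` of the weighted
sequence. -/
def ExtSet {A : Type*} (n : ℕ) (z : ℝ) (p : ℕ → A → ℝ) (h : ℕ → A) : Set (List A) :=
  {S | ∃ i F, SolidAt n z p i F ∧ S = F ++ heavyExt h (i + F.length) n}

lemma matchProb_nonneg {A : Type*} (p : ℕ → A → ℝ) (hp0 : ∀ j a, 0 ≤ p j a) :
    ∀ (P : List A) (i : ℕ), 0 ≤ matchProb p i P := by
  intro P
  induction P with
  | nil => intro i; simp [matchProb]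
  | cons a t ih => intro i; exact mul_nonneg (hp0 i a) (ih (i + 1))

lemma matchProb_append_singleton {A : Type*} (p : ℕ → A → ℝ) (a : A) :
    ∀ (P : List A) (i : ℕ),
      matchProb p i (P ++ [a]) = matchProb p i P * p (i + P.length) a := by
  intro P
  induction P with
  | nil => intro i; simp [matchProb]
  | cons b t ih =>
      intro i
      have h1 : matchProb p i ((b :: t) ++ [a]) = p i b * matchProb p (i + 1) (t ++ [a]) := rfl
      have h2 : matchProb p i (b :: t) = p i b * matchProb p (i + 1) t := rfl
      rw [h1, h2, ih (i + 1), List.length_cons]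
      have e : i + 1 + t.length = i + (t.length + 1) := by omega
      rw [e]; ring

lemma heavyExt_cons {A : Type*} (h : ℕ → A) {j n : ℕ} (hjn : j ≤ n) :
    heavyExt h j n = h j :: heavyExt h (j + 1) n := by
  unfold heavyExt
  have : n + 1 - j = (n + 1 - (j + 1)) + 1 := by omega
  rw [this, List.range_succ_eq_map, List.map_cons, List.map_map, add_zero]
  have hf : ((fun k => h (j + k)) ∘ Nat.succ) = fun k => h (j + 1 + k) := by
    funext k
    simp only [Function.comp_apply, Nat.succ_eq_add_one]
    congr 1
    omega
  rw [hf]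

lemma ext_aux {A : Type*} (n : ℕ) (z : ℝ) (p : ℕ → A → ℝ)
    (hp0 : ∀ j a, 0 ≤ p j a) (h : ℕ → A) (hh : ∀ j a, p j a ≤ p j (h j)) :
    ∀ (m : ℕ) (i : ℕ) (F : List A), SolidAt n z p i F → n + 1 - (i + F.length) ≤ m →
      ∃ F', RightMaximalAt n z p i F' ∧
        F ++ heavyExt h (i + F.length) n = F' ++ heavyExt h (i + F'.length) n := by
  intro m
  induction m with
  | zero =>
      intro i F hF hm
      refine ⟨F, ⟨hF, fun s hs => ?_⟩, rfl⟩
      have := hs.2.1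
      simp only [List.length_append, List.length_cons] at this
      omega
  | succ m ih =>
      intro i F hF hm
      by_cases hrm : ∀ s : A, ¬ SolidAt n z p i (F ++ [s])
      · exact ⟨F, ⟨hF, hrm⟩, rfl⟩
      · push_neg at hrm
        obtain ⟨s, hs⟩ := hrm
        have hlen : i + F.length ≤ n := by
          have := hs.2.1
          simp only [List.length_append, List.length_cons] at this
          omega
        set j := i + F.length with hj
        have hsolid : SolidAt n z p i (F ++ [h j]) := by
          refine ⟨hF.1, ?_, ?_⟩
          · simp only [List.length_append, List.length_cons, List.length_nil]; omega
          · rw [matchProb_append_singleton]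
            calc 1 / z ≤ matchProb p i (F ++ [s]) := hs.2.2
              _ = matchProb p i F * p j s := matchProb_append_singleton p s F i
              _ ≤ matchProb p i F * p j (h j) :=
                  mul_le_mul_of_nonneg_left (hh j s) (matchProb_nonneg p hp0 F i)
        have hm' : n + 1 - (i + (F ++ [h j]).length) ≤ m := by
          simp only [List.length_append, List.length_cons, List.length_nil]; omega
        obtain ⟨F', hF', heq⟩ := ih i (F ++ [h j]) hsolid hm'
        refine ⟨F', hF', ?_⟩
        have e : i + (F ++ [h j]).length = j + 1 := by
          simp only [List.length_append, List.length_cons, List.length_nil]; omega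
        rw [heavyExt_cons h hlen, ← heq, e, List.append_assoc, List.singleton_append]

/-- `ℰ`, the set of extensions of all solid factors, equals the set of extensions of
all right-maximal solid factors. -/
theorem stmt5 {A : Type*} (n : ℕ) (z : ℝ) (hz : 1 ≤ z) (p : ℕ → A → ℝ)
    (hp0 : ∀ j a, 0 ≤ p j a) (h : ℕ → A) (hh : ∀ j a, p j a ≤ p j (h j)) :
    ExtSet n z p h =
      {S | ∃ i F, RightMaximalAt n z p i F ∧ S = F ++ heavyExt h (i + F.length) n} := by
  ext S
  constructor
  · rintro ⟨i, F, hF, rfl⟩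
    obtain ⟨F', hF', heq⟩ :=
      ext_aux n z p hp0 h hh (n + 1 - (i + F.length)) i F hF le_rfl
    exact ⟨i, F', hF', heq⟩
  · rintro ⟨i, F, hF, rfl⟩
    exact ⟨i, F, hF.1, rfl⟩
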